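/- arXiv:1806.00952 — 12 statements merged into one kernel-verified Lean document; each statement's English description precedes it below -/
import Mathlib

section
/- For any parameter w ∈ ℝ^m and noise values v_i satisfying y_i = x_iᵀw + v_i, any step size η > 0, and every i ≥ 1, the SGD iterates satisfy the identity ‖w − w_{i−1}‖² + η v_i² = ‖w − w_i‖² + η(1 − η‖x_i‖²) e_i² + η e_{p,i}², where e_i := y_i − x_iᵀw_{i−1} and e_{p,i} := x_iᵀw − x_iᵀw_{i−1}. -/
open scoped RealInnerProductSpace

section SGDStep

variable {E : Type*} [NormedAddCommGroup E] [InnerProductSpace ℝ E]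

theorem norm_sub_smul_sq_real (d x : E) (c : ℝ) :
    ‖d - c • x‖ ^ 2 = ‖d‖ ^ 2 - 2 * (c * ⟪x, d⟫) + c ^ 2 * ‖x‖ ^ 2 := by
  rw [norm_sub_sq_real, inner_smul_right, norm_smul, real_inner_comm, mul_pow,
    Real.norm_eq_abs, sq_abs]

theorem sgd_step_energy_identity (x w wstar : E) (η y v : ℝ) (hy : y = ⟪x, wstar⟫ + v) :
    ‖wstar - w‖ ^ 2 + η * v ^ 2 =
      ‖wstar - (w + (η * (y - ⟪x, w⟫)) • x)‖ ^ 2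
        + η * (1 - η * ‖x‖ ^ 2) * (y - ⟪x, w⟫) ^ 2
        + η * (⟪x, wstar⟫ - ⟪x, w⟫) ^ 2 := by
  have hdiff : wstar - (w + (η * (y - ⟪x, w⟫)) • x) =
      (wstar - w) - (η * (y - ⟪x, w⟫)) • x := sub_add_eq_sub_sub _ _ _
  rw [hdiff, norm_sub_smul_sq_real, inner_sub_right, hy]
  ring

end SGDStep

theorem stmt_0_general {m : ℕ} (x : ℕ → EuclideanSpace ℝ (Fin m)) (y : ℕ → ℝ)
    (η : ℝ)
    (w : ℕ → EuclideanSpace ℝ (Fin m))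
    (hupd : ∀ i : ℕ,
      w (i + 1) = w i + (η * (y (i + 1) - ⟪x (i + 1), w i⟫)) • x (i + 1))
    (wstar : EuclideanSpace ℝ (Fin m)) (v : ℕ → ℝ)
    (hdata : ∀ i : ℕ, y (i + 1) = ⟪x (i + 1), wstar⟫ + v (i + 1)) :
    ∀ i : ℕ,
      ‖wstar - w i‖ ^ 2 + η * v (i + 1) ^ 2 =
        ‖wstar - w (i + 1)‖ ^ 2
          + η * (1 - η * ‖x (i + 1)‖ ^ 2) * (y (i + 1) - ⟪x (i + 1), w i⟫) ^ 2
          + η * (⟪x (i + 1), wstar⟫ - ⟪x (i + 1), w i⟫) ^ 2 := by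
  intro i
  rw [hupd i]
  exact sgd_step_energy_identity _ _ _ _ _ _ (hdata i)

/-- Lemma 1, fundamental per-step identity for SGD on square loss of a
linear model. Data points are indexed `1, 2, …` (step `i+1` uses data point `i+1`). -/
theorem stmt_0 {m : ℕ} (x : ℕ → EuclideanSpace ℝ (Fin m)) (y : ℕ → ℝ)
    (η : ℝ) (hη : 0 < η)
    (w : ℕ → EuclideanSpace ℝ (Fin m))
    (hupd : ∀ i : ℕ,
      w (i + 1) = w i + (η * (y (i + 1) - ⟪x (i + 1), w i⟫)) • x (i + 1))
    (wstar : EuclideanSpace ℝ (Fin m)) (v : ℕ → ℝ)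
    (hdata : ∀ i : ℕ, y (i + 1) = ⟪x (i + 1), wstar⟫ + v (i + 1)) :
    ∀ i : ℕ,
      ‖wstar - w i‖ ^ 2 + η * v (i + 1) ^ 2 =
        ‖wstar - w (i + 1)‖ ^ 2
          + η * (1 - η * ‖x (i + 1)‖ ^ 2) * (y (i + 1) - ⟪x (i + 1), w i⟫) ^ 2
          + η * (⟪x (i + 1), wstar⟫ - ⟪x (i + 1), w i⟫) ^ 2 :=
  stmt_0_general x y η w hupd wstar v hdata
end

section
/- For any parameter w ∈ ℝ^m and noise values v_i satisfying y_i = x_iᵀw + v_i for i = 1, …, T, any initialization w_0, any step size η > 0, and any number of steps T ≥ 1, the SGD iterates satisfy ‖w − w_0‖² + η Σ_{i=1}^T v_i² = ‖w − w_T‖² + η Σ_{i=1}^T (1 − η‖x_i‖²) e_i² + η Σ_{i=1}^T e_{p,i}², where e_i := y_i − x_iᵀw_{i−1} and e_{p,i} := x_iᵀw − x_iᵀw_{i−1}. -/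
/-!
Each SGD step is an exact energy balance: expanding `‖w⋆ - w_i‖²` for
`w_i = w_{i-1} + η e_i x_i` and using `v_i = e_i - e_{p,i}` relates it to `‖w⋆ - w_{i-1}‖²`
with no remainder. Summing these balances over `i` telescopes the squared distances.
-/

open scoped RealInnerProductSpace

open Finset

theorem Finset.add_sum_range_eq_of_forall_add_eq {M : Type*} [AddCommMonoid M]
    {a c d : ℕ → M} (h : ∀ i, a i + c i = a (i + 1) + d i) (T : ℕ) :
    a 0 + ∑ i ∈ range T, c i = a T + ∑ i ∈ range T, d i := by
  induction T with
  | zero => simp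
  | succ T ih =>
    rw [sum_range_succ, sum_range_succ, ← add_assoc, ih, add_right_comm, h, add_right_comm,
      add_assoc]

theorem norm_sub_sgd_step_sq {E : Type*} [NormedAddCommGroup E] [InnerProductSpace ℝ E]
    (η y v : ℝ) (x w w' wstar : E) (hy : y = ⟪x, wstar⟫ + v)
    (hw' : w' = w + (η * (y - ⟪x, w⟫)) • x) :
    ‖wstar - w‖ ^ 2 + η * v ^ 2 =
      ‖wstar - w'‖ ^ 2 + (η * ((1 - η * ‖x‖ ^ 2) * (y - ⟪x, w⟫) ^ 2)
        + η * (⟪x, wstar⟫ - ⟪x, w⟫) ^ 2) := by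
  have hdiff : wstar - w' = (wstar - w) - (η * (y - ⟪x, w⟫)) • x := by
    rw [hw']; abel
  have hinner : ⟪wstar - w, x⟫ = ⟪x, wstar⟫ - ⟪x, w⟫ := by
    rw [real_inner_comm, inner_sub_right]
  rw [hdiff, norm_sub_sq_real (wstar - w), real_inner_smul_right, norm_smul, mul_pow,
    Real.norm_eq_abs, sq_abs, hinner, hy]
  ring

theorem stmt_1_general {m : ℕ} (T : ℕ)
    (x : ℕ → EuclideanSpace ℝ (Fin m)) (y : ℕ → ℝ)
    (η : ℝ)
    (w₀ : EuclideanSpace ℝ (Fin m))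
    (w : ℕ → EuclideanSpace ℝ (Fin m)) (hw0 : w 0 = w₀)
    (hupd : ∀ i : ℕ,
      w (i + 1) = w i + (η * (y (i + 1) - ⟪x (i + 1), w i⟫)) • x (i + 1))
    (wstar : EuclideanSpace ℝ (Fin m)) (v : ℕ → ℝ)
    (hdata : ∀ i : ℕ, y (i + 1) = ⟪x (i + 1), wstar⟫ + v (i + 1)) :
    ‖wstar - w₀‖ ^ 2 + η * ∑ i ∈ Finset.range T, v (i + 1) ^ 2 =
      ‖wstar - w T‖ ^ 2
        + η * ∑ i ∈ Finset.range T,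
            (1 - η * ‖x (i + 1)‖ ^ 2) * (y (i + 1) - ⟪x (i + 1), w i⟫) ^ 2
        + η * ∑ i ∈ Finset.range T,
            (⟪x (i + 1), wstar⟫ - ⟪x (i + 1), w i⟫) ^ 2 := by
  have htel := Finset.add_sum_range_eq_of_forall_add_eq
    (fun i ↦ norm_sub_sgd_step_sq η _ _ _ _ _ _ (hdata i) (hupd i)) T
  simp only [hw0, ← mul_sum, sum_add_distrib] at htel
  rw [htel, add_assoc]

/-- Lemma 2, fundamental telescoped identity for SGD on square loss of a
linear model. Data points are indexed `1, 2, …` (step `i+1` uses data point `i+1`). -/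
theorem stmt_1 {m : ℕ} (T : ℕ) (hT : 1 ≤ T)
    (x : ℕ → EuclideanSpace ℝ (Fin m)) (y : ℕ → ℝ)
    (η : ℝ) (hη : 0 < η)
    (w₀ : EuclideanSpace ℝ (Fin m))
    (w : ℕ → EuclideanSpace ℝ (Fin m)) (hw0 : w 0 = w₀)
    (hupd : ∀ i : ℕ,
      w (i + 1) = w i + (η * (y (i + 1) - ⟪x (i + 1), w i⟫)) • x (i + 1))
    (wstar : EuclideanSpace ℝ (Fin m)) (v : ℕ → ℝ)
    (hdata : ∀ i : ℕ, y (i + 1) = ⟪x (i + 1), wstar⟫ + v (i + 1)) :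
    ‖wstar - w₀‖ ^ 2 + η * ∑ i ∈ Finset.range T, v (i + 1) ^ 2 =
      ‖wstar - w T‖ ^ 2
        + η * ∑ i ∈ Finset.range T,
            (1 - η * ‖x (i + 1)‖ ^ 2) * (y (i + 1) - ⟪x (i + 1), w i⟫) ^ 2
        + η * ∑ i ∈ Finset.range T,
            (⟪x (i + 1), wstar⟫ - ⟪x (i + 1), w i⟫) ^ 2 :=
  stmt_1_general T x y η w₀ w hw0 hupd wstar v hdata
end

section
/- Suppose 0 < η and η‖x_i‖² ≤ 1 for every i = 1, …, T. Then for every parameter w ∈ ℝ^m and every noise sequence v_1, …, v_T with y_i = x_iᵀw + v_i, the SGD iterates satisfy ‖w − w_T‖² + η Σ_{i=1}^T (x_iᵀw − x_iᵀw_{i−1})² ≤ ‖w − w_0‖² + η Σ_{i=1}^T v_i². In particular the SGD estimator makes the worst-case ratio of prediction-error energy to disturbance energy at most 1. -/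
open scoped RealInnerProductSpace

/-
With `d_i = w - w_i` the estimation error, one SGD step reads
`d_{i+1} = d_i - η (⟪x_i, d_i⟫ + v_i) x_i`. Expanding the square and using `η ‖x_i‖² ≤ 1` gives
the one-step energy inequality `‖d_{i+1}‖² + η ⟪x_i, d_i⟫² ≤ ‖d_i‖² + η v_i²`; summing it over
`i` telescopes to the claim.
-/

lemma sgd_step_energy_le {E : Type*} [NormedAddCommGroup E] [InnerProductSpace ℝ E]
    (a d : E) {η : ℝ} (v : ℝ) (hη : 0 ≤ η) (hstep : η * ‖a‖ ^ 2 ≤ 1) :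
    ‖d - (η * (⟪a, d⟫ + v)) • a‖ ^ 2 + η * ⟪a, d⟫ ^ 2 ≤ ‖d‖ ^ 2 + η * v ^ 2 := by
  have hexpand : ‖d - (η * (⟪a, d⟫ + v)) • a‖ ^ 2
      = ‖d‖ ^ 2 - 2 * (η * (⟪a, d⟫ + v) * ⟪a, d⟫) + (η * (⟪a, d⟫ + v)) ^ 2 * ‖a‖ ^ 2 := by
    rw [norm_sub_sq_real, real_inner_smul_right, real_inner_comm, norm_smul, Real.norm_eq_abs,
      mul_pow, sq_abs]
  have hquad : (η * (⟪a, d⟫ + v)) ^ 2 * ‖a‖ ^ 2 ≤ η * (⟪a, d⟫ + v) ^ 2 := by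
    have := mul_le_mul_of_nonneg_left hstep (mul_nonneg hη (sq_nonneg (⟪a, d⟫ + v)))
    linear_combination this
  rw [hexpand]
  linear_combination hquad

lemma add_sum_range_le_of_succ_le {α : Type*} [AddCommGroup α] [PartialOrder α]
    [IsOrderedAddMonoid α] (f b c : ℕ → α) (n : ℕ)
    (h : ∀ i ∈ Finset.range n, f (i + 1) + c i ≤ f i + b i) :
    f n + ∑ i ∈ Finset.range n, c i ≤ f 0 + ∑ i ∈ Finset.range n, b i := by
  have hsum : ∑ i ∈ Finset.range n, (f (i + 1) - f i) ≤ ∑ i ∈ Finset.range n, (b i - c i) :=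
    Finset.sum_le_sum fun i hi => by
      rw [sub_le_sub_iff, add_comm (b i)]
      exact h i hi
  rw [Finset.sum_range_sub, Finset.sum_sub_distrib, sub_le_sub_iff] at hsum
  rwa [add_comm _ (f 0)] at hsum

theorem stmt_2_general {m : ℕ} (T : ℕ)
    (x : ℕ → EuclideanSpace ℝ (Fin m)) (y : ℕ → ℝ)
    (η : ℝ) (hη : 0 < η)
    (hstep : ∀ i ∈ Finset.range T, η * ‖x (i + 1)‖ ^ 2 ≤ 1)
    (w₀ : EuclideanSpace ℝ (Fin m))
    (w : ℕ → EuclideanSpace ℝ (Fin m)) (hw0 : w 0 = w₀)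
    (hupd : ∀ i : ℕ,
      w (i + 1) = w i + (η * (y (i + 1) - ⟪x (i + 1), w i⟫)) • x (i + 1))
    (wstar : EuclideanSpace ℝ (Fin m)) (v : ℕ → ℝ)
    (hdata : ∀ i : ℕ, y (i + 1) = ⟪x (i + 1), wstar⟫ + v (i + 1)) :
    ‖wstar - w T‖ ^ 2
        + η * ∑ i ∈ Finset.range T, (⟪x (i + 1), wstar⟫ - ⟪x (i + 1), w i⟫) ^ 2
      ≤ ‖wstar - w₀‖ ^ 2 + η * ∑ i ∈ Finset.range T, v (i + 1) ^ 2 := by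
  have herror (i : ℕ) : wstar - w (i + 1)
      = (wstar - w i) - (η * (⟪x (i + 1), wstar - w i⟫ + v (i + 1))) • x (i + 1) := by
    rw [hupd, hdata, inner_sub_right]
    module
  have henergy (i : ℕ) (hi : i ∈ Finset.range T) :
      ‖wstar - w (i + 1)‖ ^ 2 + η * (⟪x (i + 1), wstar⟫ - ⟪x (i + 1), w i⟫) ^ 2
        ≤ ‖wstar - w i‖ ^ 2 + η * v (i + 1) ^ 2 := by
    rw [herror, ← inner_sub_right]
    exact sgd_step_energy_le _ _ _ hη.le (hstep i hi)
  rw [← hw0, Finset.mul_sum, Finset.mul_sum]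
  exact add_sum_range_le_of_succ_le (fun i => ‖wstar - w i‖ ^ 2) _ _ T henergy

/-- upper bound part of Theorem 1: for small enough step size, SGD makes the
energy of the estimation errors at most the energy of the disturbances. -/
theorem stmt_2 {m : ℕ} (T : ℕ) (hT : 1 ≤ T)
    (x : ℕ → EuclideanSpace ℝ (Fin m)) (y : ℕ → ℝ)
    (η : ℝ) (hη : 0 < η)
    (hstep : ∀ i ∈ Finset.range T, η * ‖x (i + 1)‖ ^ 2 ≤ 1)
    (w₀ : EuclideanSpace ℝ (Fin m))
    (w : ℕ → EuclideanSpace ℝ (Fin m)) (hw0 : w 0 = w₀)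
    (hupd : ∀ i : ℕ,
      w (i + 1) = w i + (η * (y (i + 1) - ⟪x (i + 1), w i⟫)) • x (i + 1))
    (wstar : EuclideanSpace ℝ (Fin m)) (v : ℕ → ℝ)
    (hdata : ∀ i : ℕ, y (i + 1) = ⟪x (i + 1), wstar⟫ + v (i + 1)) :
    ‖wstar - w T‖ ^ 2
        + η * ∑ i ∈ Finset.range T, (⟪x (i + 1), wstar⟫ - ⟪x (i + 1), w i⟫) ^ 2
      ≤ ‖wstar - w₀‖ ^ 2 + η * ∑ i ∈ Finset.range T, v (i + 1) ^ 2 :=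
  stmt_2_general T x y η hη hstep w₀ w hw0 hupd wstar v hdata
end

section
/- Fix vectors x_1, …, x_T ∈ ℝ^m, an initialization w_0 ∈ ℝ^m, and η > 0. For ANY causal estimator, i.e., any family of maps F_i : ℝ^i → ℝ^m producing estimates w_i = F_i(y_1, …, y_i) for i = 1, …, T, there exist a parameter ŵ ∈ ℝ^m and noise values v̂_1, …, v̂_T (with labels y_i := x_iᵀŵ + v̂_i fed to the estimator) such that ‖ŵ − w_0‖² + η Σ_{i=1}^T v̂_i² > 0 and ‖ŵ − w_T‖² + η Σ_{i=1}^T (x_iᵀŵ − x_iᵀw_{i−1})² = ‖ŵ − w_0‖² + η Σ_{i=1}^T v̂_i². Consequently no estimator can achieve a worst-case ratio smaller than 1. -/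
open scoped RealInnerProductSpace

/-!
The adversary picks the noise so that every label equals the estimator's own prediction
`⟪x i, w (i - 1)⟫`. The estimates then no longer depend on `ŵ`, and each prediction error
`⟪x i, ŵ⟫ - ⟪x i, w (i - 1)⟫` cancels the noise `v̂ i` up to sign. It remains to choose
`ŵ ≠ w₀` equidistant from `w₀` and the final estimate `w T`.
-/

theorem exists_dist_eq_dist_ne {E : Type*} [NormedAddCommGroup E] [NormedSpace ℝ E]
    [Nontrivial E] (a b : E) : ∃ c : E, dist c b = dist c a ∧ c ≠ a := by
  by_cases hab : a = b
  · obtain ⟨c, hc⟩ := exists_ne a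
    exact ⟨c, by rw [hab], hc⟩
  · refine ⟨midpoint ℝ a b, by rw [dist_midpoint_right, dist_midpoint_left], ?_⟩
    rwa [Ne, midpoint_eq_left_iff]

section OwnPredictions

variable {E : Type*} [NormedAddCommGroup E] [InnerProductSpace ℝ E]

noncomputable def iteratesOnOwnPredictions (x : ℕ → E) (w₀ : E)
    (F : (i : ℕ) → (Fin i → ℝ) → E) : ℕ → E
  | 0 => w₀
  | (i + 1) =>
    F (i + 1) (fun j : Fin (i + 1) => ⟪x (j.1 + 1), iteratesOnOwnPredictions x w₀ F j.1⟫)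
  decreasing_by exact j.2

theorem eq_iteratesOnOwnPredictions {x : ℕ → E} {w₀ : E}
    {F : (i : ℕ) → (Fin i → ℝ) → E} {y : ℕ → ℝ} {w : ℕ → E}
    (hy : ∀ i, y (i + 1) = ⟪x (i + 1), iteratesOnOwnPredictions x w₀ F i⟫)
    (hw₀ : w 0 = w₀) (hw : ∀ i, w (i + 1) = F (i + 1) (fun j : Fin (i + 1) => y (j.1 + 1))) :
    w = iteratesOnOwnPredictions x w₀ F := by
  funext i
  cases i with
  | zero => rw [hw₀, iteratesOnOwnPredictions]
  | succ i =>
    rw [hw i, iteratesOnOwnPredictions]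
    exact congrArg _ (funext fun j => hy j.1)

end OwnPredictions

theorem stmt_3_general {m : ℕ} (hm : 0 < m) (T : ℕ)
    (x : ℕ → EuclideanSpace ℝ (Fin m))
    (w₀ : EuclideanSpace ℝ (Fin m))
    (η : ℝ) (hη : 0 < η)
    (F : (i : ℕ) → (Fin i → ℝ) → EuclideanSpace ℝ (Fin m)) :
    ∃ (what : EuclideanSpace ℝ (Fin m)) (vhat : ℕ → ℝ),
      ∀ (y : ℕ → ℝ) (w : ℕ → EuclideanSpace ℝ (Fin m)),
        (∀ i : ℕ, y (i + 1) = ⟪x (i + 1), what⟫ + vhat (i + 1)) →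
        w 0 = w₀ →
        (∀ i : ℕ, w (i + 1) = F (i + 1) (fun j : Fin (i + 1) => y (j.1 + 1))) →
        0 < ‖what - w₀‖ ^ 2 + η * ∑ i ∈ Finset.range T, vhat (i + 1) ^ 2 ∧
        ‖what - w T‖ ^ 2
            + η * ∑ i ∈ Finset.range T, (⟪x (i + 1), what⟫ - ⟪x (i + 1), w i⟫) ^ 2
          = ‖what - w₀‖ ^ 2 + η * ∑ i ∈ Finset.range T, vhat (i + 1) ^ 2 := by
  have : Nonempty (Fin m) := ⟨⟨0, hm⟩⟩
  set W := iteratesOnOwnPredictions x w₀ F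
  obtain ⟨what, hdist, hne⟩ := exists_dist_eq_dist_ne w₀ (W T)
  refine ⟨what, fun i => ⟪x i, W (i - 1)⟫ - ⟪x i, what⟫, fun y w hy hw₀ hw => ?_⟩
  obtain rfl : w = W := eq_iteratesOnOwnPredictions (fun i => by simp [hy, W]) hw₀ hw
  simp only [Nat.add_sub_cancel, ← dist_eq_norm, hdist]
  constructor
  · have := dist_pos.2 hne
    positivity
  · congr 2
    exact Finset.sum_congr rfl fun i _ => by ring

/-- (lower bound part of Theorem 1: against any causal estimator, the
adversary can make the ratio of estimation-error energy to disturbance energy exactly 1,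
with positive disturbance energy; hence no estimator beats ratio 1).
The estimator is an arbitrary family of maps `F i : ℝ^i → ℝ^m`; its iterates are
`w (i+1) = F (i+1) (y 1, …, y (i+1))` with `w 0 = w₀`, and the labels fed to it are
`y i = ⟪x i, ŵ⟫ + v̂ i`. -/
theorem stmt_3 {m : ℕ} (hm : 0 < m) (T : ℕ) (hT : 1 ≤ T)
    (x : ℕ → EuclideanSpace ℝ (Fin m))
    (w₀ : EuclideanSpace ℝ (Fin m))
    (η : ℝ) (hη : 0 < η)
    (F : (i : ℕ) → (Fin i → ℝ) → EuclideanSpace ℝ (Fin m)) :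
    ∃ (what : EuclideanSpace ℝ (Fin m)) (vhat : ℕ → ℝ),
      ∀ (y : ℕ → ℝ) (w : ℕ → EuclideanSpace ℝ (Fin m)),
        (∀ i : ℕ, y (i + 1) = ⟪x (i + 1), what⟫ + vhat (i + 1)) →
        w 0 = w₀ →
        (∀ i : ℕ, w (i + 1) = F (i + 1) (fun j : Fin (i + 1) => y (j.1 + 1))) →
        0 < ‖what - w₀‖ ^ 2 + η * ∑ i ∈ Finset.range T, vhat (i + 1) ^ 2 ∧
        ‖what - w T‖ ^ 2
            + η * ∑ i ∈ Finset.range T, (⟪x (i + 1), what⟫ - ⟪x (i + 1), w i⟫) ^ 2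
          = ‖what - w₀‖ ^ 2 + η * ∑ i ∈ Finset.range T, vhat (i + 1) ^ 2 :=
  stmt_3_general hm T x w₀ η hη F
end

section
/- In the interpolating linear regime (there exists w ∈ ℝ^m with y_i = x_iᵀw for all i ≥ 1), if 0 < η and η‖x_i‖² < 2 − δ for all i for some fixed δ > 0, then the SGD innovations e_i := y_i − x_iᵀw_{i−1} satisfy η Σ_{i=1}^∞ (2 − η‖x_i‖²) e_i² ≤ ‖w − w_0‖²; in particular Σ_{i=1}^∞ e_i² < ∞ and e_i → 0 as i → ∞. -/
open scoped RealInnerProductSpace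

/-!
Writing `e_i = ⟪x_i, w - w_{i-1}⟫` for the innovation, one SGD step moves the error
`w - w_{i-1}` by `-η e_i x_i`, which lowers `‖w - w_i‖²` by exactly `η (2 - η‖x_i‖²) e_i²`.
These decrements are nonnegative, so they telescope to at most `‖w - w_0‖²`; since
`2 - η‖x_i‖² > δ`, the squared innovations are summable as well, hence `e_i → 0`.
-/

section InnerProduct

variable {E : Type*} [NormedAddCommGroup E] [InnerProductSpace ℝ E]

theorem norm_sub_smul_inner_sq (v x : E) (η : ℝ) :
    ‖v - (η * ⟪x, v⟫) • x‖ ^ 2 = ‖v‖ ^ 2 - η * ((2 - η * ‖x‖ ^ 2) * ⟪x, v⟫ ^ 2) := by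
  rw [norm_sub_sq_real, real_inner_smul_right, norm_smul, mul_pow, Real.norm_eq_abs, sq_abs,
    real_inner_comm]
  ring

end InnerProduct

theorem Real.summable_and_tsum_le_of_succ_add_le {a f : ℕ → ℝ} (ha : ∀ n, 0 ≤ a n)
    (hf : ∀ n, 0 ≤ f n) (hstep : ∀ n, a (n + 1) + f n ≤ a n) :
    Summable f ∧ ∑' n, f n ≤ a 0 := by
  have hpartial : ∀ n, ∑ i ∈ Finset.range n, f i ≤ a 0 := fun n => by
    calc ∑ i ∈ Finset.range n, f i ≤ ∑ i ∈ Finset.range n, (a i - a (i + 1)) :=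
          Finset.sum_le_sum fun i _ => by linarith [hstep i]
      _ = a 0 - a n := Finset.sum_range_sub' a n
      _ ≤ a 0 := by linarith [ha n]
  exact ⟨summable_of_sum_range_le hf hpartial, Real.tsum_le_of_sum_range_le hf hpartial⟩

theorem Real.tendsto_zero_of_summable_sq {e : ℕ → ℝ} (he : Summable fun n => e n ^ 2) :
    Filter.Tendsto e Filter.atTop (nhds 0) := by
  have hsq := (Real.continuous_sqrt.tendsto 0).comp he.tendsto_atTop_zero
  rw [tendsto_zero_iff_abs_tendsto_zero]
  simpa [Function.comp_def, Real.sqrt_sq_eq_abs] using hsq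

/-- in the interpolating linear regime with step size bounded away from
`2/‖x_i‖²`, the SGD innovations are square-summable and vanish. -/
theorem stmt_5 {m : ℕ} (x : ℕ → EuclideanSpace ℝ (Fin m)) (y : ℕ → ℝ)
    (wstar : EuclideanSpace ℝ (Fin m))
    (hdata : ∀ i : ℕ, y (i + 1) = ⟪x (i + 1), wstar⟫)
    (η : ℝ) (hη : 0 < η)
    (δ : ℝ) (hδ : 0 < δ)
    (hstep : ∀ i : ℕ, η * ‖x (i + 1)‖ ^ 2 < 2 - δ)
    (w₀ : EuclideanSpace ℝ (Fin m))
    (w : ℕ → EuclideanSpace ℝ (Fin m)) (hw0 : w 0 = w₀)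
    (hupd : ∀ i : ℕ,
      w (i + 1) = w i + (η * (y (i + 1) - ⟪x (i + 1), w i⟫)) • x (i + 1)) :
    η * ∑' i : ℕ, (2 - η * ‖x (i + 1)‖ ^ 2) * (y (i + 1) - ⟪x (i + 1), w i⟫) ^ 2
        ≤ ‖wstar - w₀‖ ^ 2 ∧
    Summable (fun i : ℕ => (y (i + 1) - ⟪x (i + 1), w i⟫) ^ 2) ∧
    Filter.Tendsto (fun i : ℕ => y (i + 1) - ⟪x (i + 1), w i⟫)
      Filter.atTop (nhds 0) := by
  set e : ℕ → ℝ := fun i => y (i + 1) - ⟪x (i + 1), w i⟫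
  set f : ℕ → ℝ := fun i => (2 - η * ‖x (i + 1)‖ ^ 2) * e i ^ 2
  have he : ∀ i, e i = ⟪x (i + 1), wstar - w i⟫ := fun i => by
    simp only [e, hdata i, inner_sub_right]
  have hdescent : ∀ i, ‖wstar - w (i + 1)‖ ^ 2 + η * f i = ‖wstar - w i‖ ^ 2 := fun i => by
    have hupd_i : w (i + 1) = w i + (η * e i) • x (i + 1) := hupd i
    rw [hupd_i, sub_add_eq_sub_sub, he i, norm_sub_smul_inner_sq, ← he i]
    ring
  have hδf : ∀ i, δ * e i ^ 2 ≤ f i := fun i =>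
    mul_le_mul_of_nonneg_right (by linarith [hstep i]) (sq_nonneg _)
  have hf : ∀ i, 0 ≤ f i := fun i => (mul_nonneg hδ.le (sq_nonneg _)).trans (hδf i)
  obtain ⟨hsum, hle⟩ := Real.summable_and_tsum_le_of_succ_add_le
    (a := fun n => ‖wstar - w n‖ ^ 2) (fun n => sq_nonneg _)
    (fun i => mul_nonneg hη.le (hf i)) fun i => (hdescent i).le
  have hsum_sq : Summable fun i => e i ^ 2 :=
    ((hsum.div_const η).div_const δ).of_nonneg_of_le (fun i => sq_nonneg _) fun i => by
      rw [mul_div_cancel_left₀ _ hη.ne', le_div_iff₀ hδ, mul_comm]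
      exact hδf i
  refine ⟨?_, hsum_sq, Real.tendsto_zero_of_summable_sq hsum_sq⟩
  rwa [← tsum_mul_left, ← hw0]
end

section
/- In the interpolating linear regime, suppose 0 < η and η‖x_i‖² ≤ 1 for all i, and suppose the SGD iterates w_i converge to a limit w_∞ belonging to the solution set W := {w ∈ ℝ^m : y_i = x_iᵀw for all i}. Then w_∞ is the element of W closest to the initialization in Euclidean norm: ‖w_∞ − w_0‖ ≤ ‖w − w_0‖ for every w ∈ W. In particular, if w_0 = 0, SGD converges to the minimum-ℓ²-norm interpolating solution. -/
/-!
Each SGD step moves the iterate along the current data vector `x i`, so `w n - w₀` stays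
orthogonal to every `v` with `⟪x i, v⟫ = 0` for all `i`, and by continuity so does
`w∞ - w₀`. For any interpolating `w'`, the difference `w' - w∞` is such a `v`, so
`w' - w₀ = (w∞ - w₀) + (w' - w∞)` is an orthogonal decomposition and Pythagoras gives
`‖w∞ - w₀‖ ≤ ‖w' - w₀‖`.
-/

open Filter Topology
open scoped RealInnerProductSpace

section

variable {E : Type*} [NormedAddCommGroup E] [InnerProductSpace ℝ E]

theorem norm_le_norm_add_of_inner_eq_zero {a b : E} (h : ⟪a, b⟫ = 0) : ‖a‖ ≤ ‖a + b‖ := by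
  have hpyth := norm_add_sq_eq_norm_sq_add_norm_sq_real h
  nlinarith [norm_nonneg a, norm_nonneg (a + b), mul_self_nonneg ‖b‖]

variable {x : ℕ → E} {c : ℕ → ℝ} {w : ℕ → E} {v : E}

theorem inner_sub_init_eq_zero_of_steps (hupd : ∀ i, w (i + 1) = w i + c i • x (i + 1))
    (hv : ∀ i, ⟪x (i + 1), v⟫ = 0) (n : ℕ) : ⟪w n - w 0, v⟫ = 0 := by
  induction n with
  | zero => simp
  | succ n ih =>
    rw [hupd n, add_sub_right_comm, inner_add_left, ih, real_inner_smul_left, hv n, mul_zero,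
      add_zero]

theorem inner_lim_sub_init_eq_zero_of_steps (hupd : ∀ i, w (i + 1) = w i + c i • x (i + 1))
    (hv : ∀ i, ⟪x (i + 1), v⟫ = 0) {winf : E} (hconv : Tendsto w atTop (𝓝 winf)) :
    ⟪winf - w 0, v⟫ = 0 := by
  have hlim : Tendsto (fun n => ⟪w n - w 0, v⟫) atTop (𝓝 ⟪winf - w 0, v⟫) :=
    (hconv.sub tendsto_const_nhds).inner tendsto_const_nhds
  simp only [inner_sub_init_eq_zero_of_steps hupd hv] at hlim
  exact tendsto_nhds_unique hlim tendsto_const_nhds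

end

theorem stmt_6_general {m : ℕ} (x : ℕ → EuclideanSpace ℝ (Fin m)) (y : ℕ → ℝ)
    (W : Set (EuclideanSpace ℝ (Fin m)))
    (hWdef : W = {u : EuclideanSpace ℝ (Fin m) | ∀ i : ℕ, y (i + 1) = ⟪x (i + 1), u⟫})
    (η : ℝ)
    (w₀ : EuclideanSpace ℝ (Fin m))
    (w : ℕ → EuclideanSpace ℝ (Fin m)) (hw0 : w 0 = w₀)
    (hupd : ∀ i : ℕ,
      w (i + 1) = w i + (η * (y (i + 1) - ⟪x (i + 1), w i⟫)) • x (i + 1))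
    (winf : EuclideanSpace ℝ (Fin m))
    (hconv : Filter.Tendsto w Filter.atTop (nhds winf))
    (hmem : winf ∈ W) :
    (∀ w' ∈ W, ‖winf - w₀‖ ≤ ‖w' - w₀‖) ∧
    (w₀ = 0 → ∀ w' ∈ W, ‖winf‖ ≤ ‖w'‖) := by
  subst hWdef hw0
  have closest : ∀ w' ∈ {u | ∀ i, y (i + 1) = ⟪x (i + 1), u⟫}, ‖winf - w 0‖ ≤ ‖w' - w 0‖ := by
    intro w' hw'
    have horth : ⟪winf - w 0, w' - winf⟫ = 0 :=
      inner_lim_sub_init_eq_zero_of_steps hupd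
        (fun i => by rw [inner_sub_right, ← hw' i, ← hmem i, sub_self]) hconv
    simpa using norm_le_norm_add_of_inner_eq_zero horth
  exact ⟨closest, fun h0 w' hw' => by simpa [h0] using closest w' hw'⟩

/-- (implicit regularization of SGD in the interpolating linear regime:
if the iterates converge to an interpolating solution, it is the one closest to the
initialization in Euclidean norm; in particular, from `w₀ = 0` SGD converges to the
minimum-ℓ²-norm interpolating solution). -/
theorem stmt_6 {m : ℕ} (x : ℕ → EuclideanSpace ℝ (Fin m)) (y : ℕ → ℝ)
    (W : Set (EuclideanSpace ℝ (Fin m)))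
    (hWdef : W = {u : EuclideanSpace ℝ (Fin m) | ∀ i : ℕ, y (i + 1) = ⟪x (i + 1), u⟫})
    (η : ℝ) (hη : 0 < η)
    (hstep : ∀ i : ℕ, η * ‖x (i + 1)‖ ^ 2 ≤ 1)
    (w₀ : EuclideanSpace ℝ (Fin m))
    (w : ℕ → EuclideanSpace ℝ (Fin m)) (hw0 : w 0 = w₀)
    (hupd : ∀ i : ℕ,
      w (i + 1) = w i + (η * (y (i + 1) - ⟪x (i + 1), w i⟫)) • x (i + 1))
    (winf : EuclideanSpace ℝ (Fin m))
    (hconv : Filter.Tendsto w Filter.atTop (nhds winf))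
    (hmem : winf ∈ W) :
    (∀ w' ∈ W, ‖winf - w₀‖ ≤ ‖w' - w₀‖) ∧
    (w₀ = 0 → ∀ w' ∈ W, ‖winf‖ ≤ ‖w'‖) :=
  stmt_6_general x y W hWdef η w₀ w hw0 hupd winf hconv hmem
end

section
/- For any differentiable model f_i : ℝ^m → ℝ, any differentiable loss l : ℝ → ℝ, any parameter w ∈ ℝ^m and noise values v_i satisfying y_i = f_i(w) + v_i, any step size η > 0, and every i ≥ 1, the SMD iterates satisfy the identity D_ψ(w, w_{i−1}) + η l(v_i) = D_ψ(w, w_i) + E_i(w_i, w_{i−1}) + η D_{L_i}(w, w_{i−1}), where E_i(w_i, w_{i−1}) := D_ψ(w_i, w_{i−1}) − η D_{L_i}(w_i, w_{i−1}) + η L_i(w_i). -/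
open scoped RealInnerProductSpace

/-- Bregman-divergence-like quantity `D_g(u, u') = g(u) - g(u') - ∇g(u')ᵀ(u - u')` of a
(not necessarily convex) function `g`. -/
noncomputable def Dbreg {m : ℕ} (g : EuclideanSpace ℝ (Fin m) → ℝ)
    (u u' : EuclideanSpace ℝ (Fin m)) : ℝ :=
  g u - g u' - ⟪gradient g u', u - u'⟫

/-!
The identity is pure algebra. By the three-point identity of Bregman divergences,
`D_ψ(w, w_{i-1}) - D_ψ(w, w_i) - D_ψ(w_i, w_{i-1}) = ⟪∇ψ(w_i) - ∇ψ(w_{i-1}), w - w_i⟫`,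
which the SMD update turns into `-η ⟪∇L_i(w_{i-1}), w - w_i⟫`. The same linear term appears in
`D_{L_i}(w, w_{i-1}) - D_{L_i}(w_i, w_{i-1}) = L_i(w) - L_i(w_i) - ⟪∇L_i(w_{i-1}), w - w_i⟫`,
and `L_i(w) = l(v_i)` because `y_i - f_i(w) = v_i`.
-/

section Bregman

variable {m : ℕ} (g : EuclideanSpace ℝ (Fin m) → ℝ) (a b c : EuclideanSpace ℝ (Fin m))

theorem Dbreg_sub_Dbreg_sub_Dbreg :
    Dbreg g a c - Dbreg g a b - Dbreg g b c = ⟪gradient g b - gradient g c, a - b⟫ := by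
  simp only [Dbreg, inner_sub_left, inner_sub_right]
  ring

theorem Dbreg_sub_Dbreg_left :
    Dbreg g a c - Dbreg g b c = g a - g b - ⟪gradient g c, a - b⟫ := by
  simp only [Dbreg, inner_sub_right]
  ring

end Bregman

theorem Dbreg_sub_Dbreg_sub_Dbreg_of_gradient_eq {m : ℕ} {ψ L : EuclideanSpace ℝ (Fin m) → ℝ}
    {η : ℝ} {a b c : EuclideanSpace ℝ (Fin m)}
    (hstep : gradient ψ b = gradient ψ c - η • gradient L c) :
    Dbreg ψ a c - Dbreg ψ a b - Dbreg ψ b c = -η * ⟪gradient L c, a - b⟫ := by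
  rw [Dbreg_sub_Dbreg_sub_Dbreg, hstep, sub_sub_cancel_left, inner_neg_left,
    real_inner_smul_left, neg_mul]

theorem stmt_7_general {m : ℕ} (y : ℕ → ℝ)
    (f : ℕ → EuclideanSpace ℝ (Fin m) → ℝ)
    (l : ℝ → ℝ)
    (ψ : EuclideanSpace ℝ (Fin m) → ℝ)
    (L : ℕ → EuclideanSpace ℝ (Fin m) → ℝ)
    (hLdef : ∀ i u, L i u = l (y i - f i u))
    (η : ℝ)
    (w : ℕ → EuclideanSpace ℝ (Fin m))
    (hupd : ∀ i : ℕ,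
      gradient ψ (w (i + 1)) = gradient ψ (w i) - η • gradient (L (i + 1)) (w i))
    (wstar : EuclideanSpace ℝ (Fin m)) (v : ℕ → ℝ)
    (hdata : ∀ i : ℕ, y (i + 1) = f (i + 1) wstar + v (i + 1)) :
    ∀ i : ℕ,
      Dbreg ψ wstar (w i) + η * l (v (i + 1)) =
        Dbreg ψ wstar (w (i + 1))
          + (Dbreg ψ (w (i + 1)) (w i) - η * Dbreg (L (i + 1)) (w (i + 1)) (w i)
              + η * L (i + 1) (w (i + 1)))
          + η * Dbreg (L (i + 1)) wstar (w i) := by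
  intro i
  have hnoise : L (i + 1) wstar = l (v (i + 1)) := by
    rw [hLdef, hdata, add_sub_cancel_left]
  have hψ := Dbreg_sub_Dbreg_sub_Dbreg_of_gradient_eq (a := wstar) (hupd i)
  have hL := Dbreg_sub_Dbreg_left (L (i + 1)) wstar (w (i + 1)) (w i)
  linear_combination hψ - η * hL - η * hnoise

/-- Lemma 3, fundamental per-step identity for SMD with a general model,
general loss and general strictly convex potential. Data points are indexed `1, 2, …`;
`L i` is the instantaneous loss `L_i(w) = l(y_i - f_i(w))` and the SMD iterates satisfy
`∇ψ(w_i) = ∇ψ(w_{i-1}) - η ∇L_i(w_{i-1})`. -/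
theorem stmt_7 {m : ℕ} (y : ℕ → ℝ)
    (f : ℕ → EuclideanSpace ℝ (Fin m) → ℝ) (hf : ∀ i, Differentiable ℝ (f i))
    (l : ℝ → ℝ) (hl : Differentiable ℝ l)
    (ψ : EuclideanSpace ℝ (Fin m) → ℝ) (hψ : Differentiable ℝ ψ)
    (hψconv : StrictConvexOn ℝ Set.univ ψ)
    (L : ℕ → EuclideanSpace ℝ (Fin m) → ℝ)
    (hLdef : ∀ i u, L i u = l (y i - f i u))
    (η : ℝ) (hη : 0 < η)
    (w : ℕ → EuclideanSpace ℝ (Fin m))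
    (hupd : ∀ i : ℕ,
      gradient ψ (w (i + 1)) = gradient ψ (w i) - η • gradient (L (i + 1)) (w i))
    (wstar : EuclideanSpace ℝ (Fin m)) (v : ℕ → ℝ)
    (hdata : ∀ i : ℕ, y (i + 1) = f (i + 1) wstar + v (i + 1)) :
    ∀ i : ℕ,
      Dbreg ψ wstar (w i) + η * l (v (i + 1)) =
        Dbreg ψ wstar (w (i + 1))
          + (Dbreg ψ (w (i + 1)) (w i) - η * Dbreg (L (i + 1)) (w (i + 1)) (w i)
              + η * L (i + 1) (w (i + 1)))
          + η * Dbreg (L (i + 1)) wstar (w i) :=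
  stmt_7_general y f l ψ L hLdef η w hupd wstar v hdata
end

section
/- For any differentiable model f_i : ℝ^m → ℝ, any differentiable loss l : ℝ → ℝ, any parameter w ∈ ℝ^m and noise values v_i satisfying y_i = f_i(w) + v_i for i = 1, …, T, any initialization w_0, any step size η > 0, and any T ≥ 1, the SMD iterates satisfy D_ψ(w, w_0) + η Σ_{i=1}^T l(v_i) = D_ψ(w, w_T) + Σ_{i=1}^T ( E_i(w_i, w_{i−1}) + η D_{L_i}(w, w_{i−1}) ), where E_i(w_i, w_{i−1}) := D_ψ(w_i, w_{i−1}) − η D_{L_i}(w_i, w_{i−1}) + η L_i(w_i). -/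
/-!
By the three-point identity for Bregman divergences, a mirror step
`∇ψ w' = ∇ψ w - η ∇L w` expresses `D_ψ(u, w) - D_ψ(u, w')` through divergences of `ψ` and `L`
alone. Taking `u = w*`, where `L_i(w*) = l(v_i)`, and summing over the steps telescopes.
-/

open scoped RealInnerProductSpace

section Bregman

variable {m : ℕ}

theorem Dbreg_sub_Dbreg (g : EuclideanSpace ℝ (Fin m) → ℝ) (u w w' : EuclideanSpace ℝ (Fin m)) :
    Dbreg g u w - Dbreg g u w' =
      Dbreg g w' w + ⟪gradient g w' - gradient g w, u - w'⟫ := by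
  simp only [Dbreg, inner_sub_left, inner_sub_right]
  ring

theorem Dbreg_sub_Dbreg_of_mirror_step (ψ L : EuclideanSpace ℝ (Fin m) → ℝ) (η : ℝ)
    {w w' : EuclideanSpace ℝ (Fin m)} (hstep : gradient ψ w' = gradient ψ w - η • gradient L w)
    (u : EuclideanSpace ℝ (Fin m)) :
    Dbreg ψ u w - Dbreg ψ u w' =
      ((Dbreg ψ w' w - η * Dbreg L w' w + η * L w') + η * Dbreg L u w) - η * L u := by
  rw [Dbreg_sub_Dbreg, hstep]
  simp only [Dbreg, sub_sub_cancel_left, inner_neg_left, real_inner_smul_left, inner_sub_right]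
  ring

end Bregman

theorem stmt_8_general {m : ℕ} (T : ℕ) (y : ℕ → ℝ)
    (f : ℕ → EuclideanSpace ℝ (Fin m) → ℝ)
    (l : ℝ → ℝ)
    (ψ : EuclideanSpace ℝ (Fin m) → ℝ)
    (L : ℕ → EuclideanSpace ℝ (Fin m) → ℝ)
    (hLdef : ∀ i u, L i u = l (y i - f i u))
    (η : ℝ)
    (w₀ : EuclideanSpace ℝ (Fin m))
    (w : ℕ → EuclideanSpace ℝ (Fin m)) (hw0 : w 0 = w₀)
    (hupd : ∀ i : ℕ,
      gradient ψ (w (i + 1)) = gradient ψ (w i) - η • gradient (L (i + 1)) (w i))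
    (wstar : EuclideanSpace ℝ (Fin m)) (v : ℕ → ℝ)
    (hdata : ∀ i : ℕ, y (i + 1) = f (i + 1) wstar + v (i + 1)) :
    Dbreg ψ wstar w₀ + η * ∑ i ∈ Finset.range T, l (v (i + 1)) =
      Dbreg ψ wstar (w T)
        + ∑ i ∈ Finset.range T,
            ((Dbreg ψ (w (i + 1)) (w i) - η * Dbreg (L (i + 1)) (w (i + 1)) (w i)
                + η * L (i + 1) (w (i + 1)))
              + η * Dbreg (L (i + 1)) wstar (w i)) := by
  have hnoise : ∀ i, L (i + 1) wstar = l (v (i + 1)) := fun i => by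
    rw [hLdef, hdata, add_sub_cancel_left]
  have htele := Finset.sum_range_sub' (fun i => Dbreg ψ wstar (w i)) T
  simp only [Dbreg_sub_Dbreg_of_mirror_step ψ _ η (hupd _), hnoise, Finset.sum_sub_distrib,
    ← Finset.mul_sum, hw0] at htele
  linarith

/-- Lemma 4, fundamental telescoped identity for SMD with a general model,
general loss and general strictly convex potential. -/
theorem stmt_8 {m : ℕ} (T : ℕ) (hT : 1 ≤ T) (y : ℕ → ℝ)
    (f : ℕ → EuclideanSpace ℝ (Fin m) → ℝ) (hf : ∀ i, Differentiable ℝ (f i))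
    (l : ℝ → ℝ) (hl : Differentiable ℝ l)
    (ψ : EuclideanSpace ℝ (Fin m) → ℝ) (hψ : Differentiable ℝ ψ)
    (hψconv : StrictConvexOn ℝ Set.univ ψ)
    (L : ℕ → EuclideanSpace ℝ (Fin m) → ℝ)
    (hLdef : ∀ i u, L i u = l (y i - f i u))
    (η : ℝ) (hη : 0 < η)
    (w₀ : EuclideanSpace ℝ (Fin m))
    (w : ℕ → EuclideanSpace ℝ (Fin m)) (hw0 : w 0 = w₀)
    (hupd : ∀ i : ℕ,
      gradient ψ (w (i + 1)) = gradient ψ (w i) - η • gradient (L (i + 1)) (w i))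
    (wstar : EuclideanSpace ℝ (Fin m)) (v : ℕ → ℝ)
    (hdata : ∀ i : ℕ, y (i + 1) = f (i + 1) wstar + v (i + 1)) :
    Dbreg ψ wstar w₀ + η * ∑ i ∈ Finset.range T, l (v (i + 1)) =
      Dbreg ψ wstar (w T)
        + ∑ i ∈ Finset.range T,
            ((Dbreg ψ (w (i + 1)) (w i) - η * Dbreg (L (i + 1)) (w (i + 1)) (w i)
                + η * L (i + 1) (w (i + 1)))
              + η * Dbreg (L (i + 1)) wstar (w i)) :=
  stmt_8_general T y f l ψ L hLdef η w₀ w hw0 hupd wstar v hdata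
end

section
/- Consider differentiable models f_i : ℝ^m → ℝ and a nonnegative differentiable loss l with l(0) = l'(0) = 0. Suppose η > 0 is such that w ↦ ψ(w) − η L_i(w) is convex for every i = 1, …, T. Then for every parameter w ∈ ℝ^m and noise values v_i with y_i = f_i(w) + v_i, the SMD iterates satisfy D_ψ(w, w_T) + η Σ_{i=1}^T D_{L_i}(w, w_{i−1}) ≤ D_ψ(w, w_0) + η Σ_{i=1}^T l(v_i). In particular SMD makes the worst-case ratio (D_ψ(w, w_T) + η Σ D_{L_i}(w, w_{i−1})) / (D_ψ(w, w_0) + η Σ l(v_i)) at most 1 whenever the denominator is positive. -/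
/-!
Each SMD step satisfies an exact identity relating the divergences to `w` before and after the
step; the remaining term is the Bregman divergence of the potential `ψ - η Lᵢ` between the two
iterates, which is nonnegative because that potential is convex. Summing the resulting one-step
inequalities telescopes, and `Lᵢ(w) = l(vᵢ)` on the data model.
-/

open scoped RealInnerProductSpace

theorem ConvexOn.hasFDerivAt_apply_sub_le {E : Type*} [NormedAddCommGroup E] [NormedSpace ℝ E]
    {s : Set E} {g : E → ℝ} {g' : E →L[ℝ] ℝ} {x y : E} (hg : ConvexOn ℝ s g) (hx : x ∈ s)
    (hy : y ∈ s) (hg' : HasFDerivAt g g' x) :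
    g' (y - x) ≤ g y - g x := by
  let γ : ℝ →ᵃ[ℝ] E := AffineMap.lineMap x y
  have hline : ConvexOn ℝ (γ ⁻¹' s) (g ∘ γ) := hg.comp_affineMap γ
  have hderiv : HasDerivAt (g ∘ γ) (g' (y - x)) 0 := by
    refine HasFDerivAt.comp_hasDerivAt (0 : ℝ) ?_ AffineMap.hasDerivAt_lineMap
    simpa [γ] using hg'
  simpa [slope, γ] using
    hline.le_slope_of_hasDerivAt (by simpa [γ] using hx) (by simpa [γ] using hy) zero_lt_one hderiv

section Bregman

variable {m : ℕ}

theorem Dbreg_nonneg_of_convexOn {g : EuclideanSpace ℝ (Fin m) → ℝ}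
    (hg : ConvexOn ℝ Set.univ g) {u u' : EuclideanSpace ℝ (Fin m)} (hd : DifferentiableAt ℝ g u') :
    0 ≤ Dbreg g u u' := by
  have htangent := hg.hasFDerivAt_apply_sub_le (Set.mem_univ u') (Set.mem_univ u) hd.hasFDerivAt
  rw [← inner_gradient_left] at htangent
  unfold Dbreg
  linarith

theorem Dbreg_sub_const_mul {ψ L : EuclideanSpace ℝ (Fin m) → ℝ} {u u' : EuclideanSpace ℝ (Fin m)}
    (η : ℝ) (hψ : DifferentiableAt ℝ ψ u') (hL : DifferentiableAt ℝ L u') :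
    Dbreg (fun x => ψ x - η * L x) u u' = Dbreg ψ u u' - η * Dbreg L u u' := by
  have hgrad : ⟪gradient (fun x => ψ x - η * L x) u', u - u'⟫
      = ⟪gradient ψ u', u - u'⟫ - η * ⟪gradient L u', u - u'⟫ := by
    simp only [inner_gradient_left, fderiv_fun_sub hψ (hL.const_mul η), fderiv_const_mul hL,
      sub_apply, smul_apply, smul_eq_mul]
  simp only [Dbreg, hgrad]
  ring

theorem Dbreg_mirror_step_eq {ψ L : EuclideanSpace ℝ (Fin m) → ℝ} {η : ℝ}
    {w w' : EuclideanSpace ℝ (Fin m)} (hstep : gradient ψ w' = gradient ψ w - η • gradient L w)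
    (u : EuclideanSpace ℝ (Fin m)) :
    Dbreg ψ u w' + η * Dbreg L u w
      = Dbreg ψ u w + η * L u - η * L w' - (Dbreg ψ w' w - η * Dbreg L w' w) := by
  have hsplit : u - w' = (u - w) - (w' - w) := by abel
  simp only [Dbreg, hstep, hsplit, inner_sub_left, inner_sub_right, real_inner_smul_left]
  ring

theorem Dbreg_mirror_step_le {ψ L : EuclideanSpace ℝ (Fin m) → ℝ} {η : ℝ}
    {w w' : EuclideanSpace ℝ (Fin m)} (hη : 0 ≤ η) (hψ : DifferentiableAt ℝ ψ w)
    (hL : DifferentiableAt ℝ L w) (hLnn : 0 ≤ L w')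
    (hconv : ConvexOn ℝ Set.univ (fun x => ψ x - η * L x))
    (hstep : gradient ψ w' = gradient ψ w - η • gradient L w) (u : EuclideanSpace ℝ (Fin m)) :
    Dbreg ψ u w' + η * Dbreg L u w ≤ Dbreg ψ u w + η * L u := by
  have hgap : 0 ≤ Dbreg ψ w' w - η * Dbreg L w' w := by
    rw [← Dbreg_sub_const_mul η hψ hL]
    exact Dbreg_nonneg_of_convexOn hconv (hψ.sub (hL.const_mul η))
  rw [Dbreg_mirror_step_eq hstep u]
  linarith [mul_nonneg hη hLnn]

end Bregman

theorem stmt_10_general {m : ℕ} (T : ℕ) (y : ℕ → ℝ)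
    (f : ℕ → EuclideanSpace ℝ (Fin m) → ℝ) (hf : ∀ i, Differentiable ℝ (f i))
    (l : ℝ → ℝ) (hl : Differentiable ℝ l) (hlnn : ∀ z, 0 ≤ l z)
    (ψ : EuclideanSpace ℝ (Fin m) → ℝ) (hψ : Differentiable ℝ ψ)
    (L : ℕ → EuclideanSpace ℝ (Fin m) → ℝ)
    (hLdef : ∀ i u, L i u = l (y i - f i u))
    (η : ℝ) (hη : 0 < η)
    (hstep : ∀ i ∈ Finset.range T, ConvexOn ℝ Set.univ (fun u => ψ u - η * L (i + 1) u))
    (w₀ : EuclideanSpace ℝ (Fin m))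
    (w : ℕ → EuclideanSpace ℝ (Fin m)) (hw0 : w 0 = w₀)
    (hupd : ∀ i : ℕ,
      gradient ψ (w (i + 1)) = gradient ψ (w i) - η • gradient (L (i + 1)) (w i))
    (wstar : EuclideanSpace ℝ (Fin m)) (v : ℕ → ℝ)
    (hdata : ∀ i : ℕ, y (i + 1) = f (i + 1) wstar + v (i + 1)) :
    Dbreg ψ wstar (w T) + η * ∑ i ∈ Finset.range T, Dbreg (L (i + 1)) wstar (w i)
        ≤ Dbreg ψ wstar w₀ + η * ∑ i ∈ Finset.range T, l (v (i + 1)) ∧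
    (0 < Dbreg ψ wstar w₀ + η * ∑ i ∈ Finset.range T, l (v (i + 1)) →
      (Dbreg ψ wstar (w T) + η * ∑ i ∈ Finset.range T, Dbreg (L (i + 1)) wstar (w i)) /
          (Dbreg ψ wstar w₀ + η * ∑ i ∈ Finset.range T, l (v (i + 1))) ≤ 1) := by
  have hLdiff : ∀ i, Differentiable ℝ (L i) := fun i => by
    rw [show L i = fun u => l (y i - f i u) from funext (hLdef i)]
    exact hl.comp ((differentiable_const _).sub (hf i))
  have hLstar : ∀ i, L (i + 1) wstar = l (v (i + 1)) := fun i => by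
    rw [hLdef, hdata, add_sub_cancel_left]
  have hone : ∀ i ∈ Finset.range T,
      Dbreg ψ wstar (w (i + 1)) - Dbreg ψ wstar (w i) + η * Dbreg (L (i + 1)) wstar (w i)
        ≤ η * l (v (i + 1)) := fun i hi => by
    have hstepi := Dbreg_mirror_step_le hη.le (hψ (w i)) (hLdiff (i + 1) (w i))
      (by rw [hLdef]; exact hlnn _) (hstep i hi) (hupd i) wstar
    rw [hLstar] at hstepi
    linarith
  have hbound := Finset.sum_le_sum hone
  rw [Finset.sum_add_distrib, Finset.sum_range_sub (fun i => Dbreg ψ wstar (w i)),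
    ← Finset.mul_sum, ← Finset.mul_sum, hw0] at hbound
  have hineq : Dbreg ψ wstar (w T) + η * ∑ i ∈ Finset.range T, Dbreg (L (i + 1)) wstar (w i)
      ≤ Dbreg ψ wstar w₀ + η * ∑ i ∈ Finset.range T, l (v (i + 1)) := by linarith
  exact ⟨hineq, fun hpos => (div_le_one hpos).mpr hineq⟩

/-- upper bound part of Theorem 2: under the small-step-size condition
that `ψ - η L_i` is convex for all `i`, SMD makes the worst-case ratio at most 1. -/
theorem stmt_10 {m : ℕ} (T : ℕ) (hT : 1 ≤ T) (y : ℕ → ℝ)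
    (f : ℕ → EuclideanSpace ℝ (Fin m) → ℝ) (hf : ∀ i, Differentiable ℝ (f i))
    (l : ℝ → ℝ) (hl : Differentiable ℝ l) (hlnn : ∀ z, 0 ≤ l z)
    (hl0 : l 0 = 0) (hl'0 : deriv l 0 = 0)
    (ψ : EuclideanSpace ℝ (Fin m) → ℝ) (hψ : Differentiable ℝ ψ)
    (hψconv : StrictConvexOn ℝ Set.univ ψ)
    (L : ℕ → EuclideanSpace ℝ (Fin m) → ℝ)
    (hLdef : ∀ i u, L i u = l (y i - f i u))
    (η : ℝ) (hη : 0 < η)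
    (hstep : ∀ i ∈ Finset.range T, ConvexOn ℝ Set.univ (fun u => ψ u - η * L (i + 1) u))
    (w₀ : EuclideanSpace ℝ (Fin m))
    (w : ℕ → EuclideanSpace ℝ (Fin m)) (hw0 : w 0 = w₀)
    (hupd : ∀ i : ℕ,
      gradient ψ (w (i + 1)) = gradient ψ (w i) - η • gradient (L (i + 1)) (w i))
    (wstar : EuclideanSpace ℝ (Fin m)) (v : ℕ → ℝ)
    (hdata : ∀ i : ℕ, y (i + 1) = f (i + 1) wstar + v (i + 1)) :
    Dbreg ψ wstar (w T) + η * ∑ i ∈ Finset.range T, Dbreg (L (i + 1)) wstar (w i)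
        ≤ Dbreg ψ wstar w₀ + η * ∑ i ∈ Finset.range T, l (v (i + 1)) ∧
    (0 < Dbreg ψ wstar w₀ + η * ∑ i ∈ Finset.range T, l (v (i + 1)) →
      (Dbreg ψ wstar (w T) + η * ∑ i ∈ Finset.range T, Dbreg (L (i + 1)) wstar (w i)) /
          (Dbreg ψ wstar w₀ + η * ∑ i ∈ Finset.range T, l (v (i + 1))) ≤ 1) :=
  stmt_10_general T y f hf l hl hlnn ψ hψ L hLdef η hη hstep w₀ w hw0 hupd wstar v hdata
end

section
/- Take the square loss L_i(w) = ½(y_i − x_iᵀw)² of a linear model, and let ψ : ℝ^m → ℝ be differentiable and α-strongly convex. If 0 < η and η‖x_i‖² ≤ α for all i = 1, …, T, then for every parameter w and noise values v_i with y_i = x_iᵀw + v_i, the SMD iterates satisfy D_ψ(w, w_T) + (η/2) Σ_{i=1}^T (x_iᵀw − x_iᵀw_{i−1})² ≤ D_ψ(w, w_0) + (η/2) Σ_{i=1}^T v_i². -/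
/-!
Strong convexity of `ψ` gives
`D_ψ(w, w_i) ≤ D_ψ(w, w_{i-1}) - η r_i ⟪x_i, w - w_i⟫ - (α/2) ‖w_i - w_{i-1}‖²` with the residual
`r_i = y_i - ⟪x_i, w_{i-1}⟫ = e_i + v_i`, `e_i = ⟪x_i, w - w_{i-1}⟫`.
Completing the square in `r_i` and using Cauchy–Schwarz with `η ‖x_i‖² ≤ α` to absorb
`⟪x_i, w_i - w_{i-1}⟫²` into the strong-convexity term leaves
`D_ψ(w, w_i) + (η/2) e_i² ≤ D_ψ(w, w_{i-1}) + (η/2) v_i²`, which telescopes.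
-/

open scoped RealInnerProductSpace

open Finset in
theorem Finset.add_sum_range_le_of_succ_add_le {M : Type*} [AddCommGroup M] [PartialOrder M]
    [IsOrderedAddMonoid M] {d a b : ℕ → M} {n : ℕ}
    (h : ∀ i < n, d (i + 1) + a i ≤ d i + b i) :
    d n + ∑ i ∈ range n, a i ≤ d 0 + ∑ i ∈ range n, b i := by
  induction n with
  | zero => simp
  | succ n ih =>
    have hsum := add_le_add (ih fun i hi => h i (by omega)) (h n n.lt_succ_self)
    rw [sum_range_succ, sum_range_succ]
    calc d (n + 1) + (∑ i ∈ range n, a i + a n)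
        = (d n + ∑ i ∈ range n, a i) + (d (n + 1) + a n) - d n := by abel
      _ ≤ (d 0 + ∑ i ∈ range n, b i) + (d n + b n) - d n := sub_le_sub_right hsum _
      _ = d 0 + (∑ i ∈ range n, b i + b n) := by abel

section Convex

variable {E : Type*} [NormedAddCommGroup E] {s : Set E} {f : E → ℝ} {a b : E}

theorem ConvexOn.apply_sub_le_of_hasFDerivAt [NormedSpace ℝ E] {f' : E →L[ℝ] ℝ}
    (hf : ConvexOn ℝ s f) (ha : a ∈ s) (hb : b ∈ s) (hf' : HasFDerivAt f f' a) :
    f' (b - a) ≤ f b - f a := by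
  have hline : ConvexOn ℝ (AffineMap.lineMap (k := ℝ) a b ⁻¹' s)
      (f ∘ AffineMap.lineMap (k := ℝ) a b) :=
    hf.comp_affineMap _
  have hderiv : HasDerivAt (f ∘ AffineMap.lineMap (k := ℝ) a b) (f' (b - a)) 0 := by
    rw [← AffineMap.lineMap_apply_zero a b (k := ℝ)] at hf'
    exact hf'.comp_hasDerivAt _ AffineMap.hasDerivAt_lineMap
  simpa [slope_def_field] using
    hline.le_slope_of_hasDerivAt (by simpa using ha) (by simpa using hb) one_pos hderiv

theorem StrongConvexOn.add_apply_sub_add_le_of_hasFDerivAt [InnerProductSpace ℝ E] {m : ℝ}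
    {f' : E →L[ℝ] ℝ} (hf : StrongConvexOn s m f) (ha : a ∈ s) (hb : b ∈ s)
    (hf' : HasFDerivAt f f' a) :
    f a + f' (b - a) + m / 2 * ‖b - a‖ ^ 2 ≤ f b := by
  have hg := (strongConvexOn_iff_convex.mp hf).apply_sub_le_of_hasFDerivAt ha hb
    (hf'.sub ((hasStrictFDerivAt_norm_sq a).hasFDerivAt.const_mul (m / 2)))
  simp only [sub_apply, map_sub, smul_apply, coe_innerSL_apply, nsmul_eq_mul,
    real_inner_self_eq_norm_sq] at hg
  rw [norm_sub_sq_real, map_sub, real_inner_comm]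
  linear_combination hg

end Convex

theorem Dbreg_add_sq_le_of_gradient_eq {m : ℕ} {α η : ℝ} {ψ : EuclideanSpace ℝ (Fin m) → ℝ}
    {x a b wstar : EuclideanSpace ℝ (Fin m)} {y v : ℝ}
    (hψ : DifferentiableAt ℝ ψ a) (hconv : StrongConvexOn Set.univ α ψ) (hη : 0 ≤ η)
    (hx : η * ‖x‖ ^ 2 ≤ α) (hy : y = ⟪x, wstar⟫ + v)
    (hgrad : gradient ψ b = gradient ψ a + (η * (y - ⟪x, a⟫)) • x) :
    Dbreg ψ wstar b + η / 2 * (⟪x, wstar⟫ - ⟪x, a⟫) ^ 2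
      ≤ Dbreg ψ wstar a + η / 2 * v ^ 2 := by
  have hstrong := hconv.add_apply_sub_add_le_of_hasFDerivAt (Set.mem_univ a) (Set.mem_univ b)
    hψ.hasGradientAt.hasFDerivAt
  rw [InnerProductSpace.toDual_apply_apply] at hstrong
  have hcs : ⟪x, b - a⟫ ^ 2 ≤ ‖x‖ ^ 2 * ‖b - a‖ ^ 2 := by
    rw [← mul_pow, ← sq_abs]
    exact pow_le_pow_left₀ (abs_nonneg _) (abs_real_inner_le_norm x (b - a)) 2
  have habsorb : η * ⟪x, b - a⟫ ^ 2 ≤ α * ‖b - a‖ ^ 2 :=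
    calc η * ⟪x, b - a⟫ ^ 2 ≤ η * (‖x‖ ^ 2 * ‖b - a‖ ^ 2) := by gcongr
      _ ≤ α * ‖b - a‖ ^ 2 := by rw [← mul_assoc]; gcongr
  have hsq := mul_nonneg hη (sq_nonneg (⟪x, wstar⟫ - ⟪x, a⟫ + v - ⟪x, b - a⟫))
  simp only [Dbreg, hgrad, hy, inner_add_left, real_inner_smul_left, inner_sub_right]
    at hstrong habsorb hsq ⊢
  linear_combination hstrong + habsorb / 2 + hsq / 2

theorem stmt_12_general {m : ℕ} (T : ℕ)
    (x : ℕ → EuclideanSpace ℝ (Fin m)) (y : ℕ → ℝ)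
    (α : ℝ)
    (ψ : EuclideanSpace ℝ (Fin m) → ℝ) (hψ : Differentiable ℝ ψ)
    (hψconv : StrongConvexOn Set.univ α ψ)
    (η : ℝ) (hη : 0 < η)
    (hstep : ∀ i ∈ Finset.range T, η * ‖x (i + 1)‖ ^ 2 ≤ α)
    (w₀ : EuclideanSpace ℝ (Fin m))
    (w : ℕ → EuclideanSpace ℝ (Fin m)) (hw0 : w 0 = w₀)
    (hupd : ∀ i : ℕ,
      gradient ψ (w (i + 1)) =
        gradient ψ (w i) + (η * (y (i + 1) - ⟪x (i + 1), w i⟫)) • x (i + 1))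
    (wstar : EuclideanSpace ℝ (Fin m)) (v : ℕ → ℝ)
    (hdata : ∀ i : ℕ, y (i + 1) = ⟪x (i + 1), wstar⟫ + v (i + 1)) :
    Dbreg ψ wstar (w T)
        + η / 2 * ∑ i ∈ Finset.range T, (⟪x (i + 1), wstar⟫ - ⟪x (i + 1), w i⟫) ^ 2
      ≤ Dbreg ψ wstar w₀ + η / 2 * ∑ i ∈ Finset.range T, v (i + 1) ^ 2 := by
  simp only [Finset.mul_sum, ← hw0]
  exact Finset.add_sum_range_le_of_succ_add_le (d := fun i => Dbreg ψ wstar (w i)) fun i hi =>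
    Dbreg_add_sq_le_of_gradient_eq (hψ _) hψconv hη.le (hstep i (Finset.mem_range.2 hi))
      (hdata i) (hupd i)

/-- Corollary 1, upper-bound part: SMD with an `α`-strongly convex
potential on the square loss of a linear model, with `η ‖x_i‖² ≤ α`, makes the
estimation-error energy at most the disturbance energy. The SMD iterates satisfy
`∇ψ(w_i) = ∇ψ(w_{i-1}) + η (y_i - x_iᵀw_{i-1}) x_i`. -/
theorem stmt_12 {m : ℕ} (T : ℕ) (hT : 1 ≤ T)
    (x : ℕ → EuclideanSpace ℝ (Fin m)) (y : ℕ → ℝ)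
    (α : ℝ) (hα : 0 < α)
    (ψ : EuclideanSpace ℝ (Fin m) → ℝ) (hψ : Differentiable ℝ ψ)
    (hψconv : StrongConvexOn Set.univ α ψ)
    (η : ℝ) (hη : 0 < η)
    (hstep : ∀ i ∈ Finset.range T, η * ‖x (i + 1)‖ ^ 2 ≤ α)
    (w₀ : EuclideanSpace ℝ (Fin m))
    (w : ℕ → EuclideanSpace ℝ (Fin m)) (hw0 : w 0 = w₀)
    (hupd : ∀ i : ℕ,
      gradient ψ (w (i + 1)) =
        gradient ψ (w i) + (η * (y (i + 1) - ⟪x (i + 1), w i⟫)) • x (i + 1))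
    (wstar : EuclideanSpace ℝ (Fin m)) (v : ℕ → ℝ)
    (hdata : ∀ i : ℕ, y (i + 1) = ⟪x (i + 1), wstar⟫ + v (i + 1)) :
    Dbreg ψ wstar (w T)
        + η / 2 * ∑ i ∈ Finset.range T, (⟪x (i + 1), wstar⟫ - ⟪x (i + 1), w i⟫) ^ 2
      ≤ Dbreg ψ wstar w₀ + η / 2 * ∑ i ∈ Finset.range T, v (i + 1) ^ 2 :=
  stmt_12_general T x y α ψ hψ hψconv η hη hstep w₀ w hw0 hupd wstar v hdata
end

section
/- (Implicit regularization of SMD, over-parameterized linear case.) Let l be differentiable with l(0) = 0, let ψ be continuously differentiable and strictly convex, let W := {w : y_i = x_iᵀw for all i} be nonempty, and let the SMD iterates (with any step size η > 0 and any initialization w_0) be run on the data, cycling through or sampling the data points so that each index appears infinitely often. If the iterates converge to a limit w_∞ ∈ W, then w_∞ minimizes the Bregman divergence to the initialization over W: D_ψ(w_∞, w_0) ≤ D_ψ(w, w_0) for every w ∈ W; indeed D_ψ(w, w_0) = D_ψ(w, w_∞) + D_ψ(w_∞, w_0) for all w ∈ W. In particular, if w_0 = argmin_{w∈ℝ^m}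 ψ(w), then w_∞ = argmin_{w∈W} ψ(w). -/
/-!
Mirror descent only ever moves `∇ψ` in the span of the data vectors `x_j`, and that span is
closed, so `∇ψ(w_∞) - ∇ψ(w₀)` lies in it too. Every difference of two interpolating solutions
is orthogonal to all `x_j`, so the cross term of the three-point identity
`D(w, w₀) = D(w, w_∞) + D(w_∞, w₀) + ⟪∇ψ(w_∞) - ∇ψ(w₀), w - w_∞⟫` vanishes on `W`;
nonnegativity of the Bregman divergence of a convex `ψ` then gives minimality.
-/

open scoped RealInnerProductSpace

section InnerProductSpace

variable {E : Type*} [NormedAddCommGroup E] [InnerProductSpace ℝ E]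

theorem inner_sub_eq_zero_of_mem_span {ι : Type*} {x : ι → E} {g u v : E}
    (hg : g ∈ Submodule.span ℝ (Set.range x)) (h : ∀ j, ⟪x j, u⟫ = ⟪x j, v⟫) :
    ⟪g, u - v⟫ = 0 := by
  have hle : Submodule.span ℝ (Set.range x) ≤ (ℝ ∙ (u - v))ᗮ :=
    Submodule.span_le.2 <| Set.range_subset_iff.2 fun j =>
      Submodule.mem_orthogonal_singleton_iff_inner_left.2 (by rw [inner_sub_right, h j, sub_self])
  exact Submodule.mem_orthogonal_singleton_iff_inner_left.1 (hle hg)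

variable [CompleteSpace E]

theorem ContDiff.continuous_gradient {f : E → ℝ} (hf : ContDiff ℝ 1 f) :
    Continuous (gradient f) :=
  (InnerProductSpace.toDual ℝ E).symm.continuous.comp (hf.continuous_fderiv one_ne_zero)

theorem hasGradientAt_comp_sub_inner {l : ℝ → ℝ} {c : ℝ} {a u : E}
    (hl : DifferentiableAt ℝ l (c - ⟪a, u⟫)) :
    HasGradientAt (fun v => l (c - ⟪a, v⟫)) (-deriv l (c - ⟪a, u⟫) • a) u := by
  rw [hasGradientAt_iff_hasFDerivAt]
  refine (hl.hasDerivAt.comp_hasFDerivAt u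
    ((hasFDerivAt_const c u).sub (innerSL ℝ a).hasFDerivAt)).congr_fderiv ?_
  ext v
  simp

theorem ConvexOn.inner_gradient_le_sub {f : E → ℝ} (hf : ConvexOn ℝ Set.univ f) {u v : E}
    (hdf : DifferentiableAt ℝ f v) : ⟪gradient f v, u - v⟫ ≤ f u - f v := by
  rw [← AffineMap.lineMap_apply_zero v u (k := ℝ)] at hdf
  have hline := hdf.hasFDerivAt.comp_hasDerivAt (0 : ℝ) AffineMap.hasDerivAt_lineMap
  simpa [slope_def_field, gradient] using
    (hf.comp_affineMap (AffineMap.lineMap v u)).le_slope_of_hasDerivAt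
      (Set.mem_univ 0) (Set.mem_univ 1) zero_lt_one hline

theorem gradient_sub_mem_span_of_mirror_descent {ι : Type*} {x : ι → E} {y : ι → ℝ}
    {l : ℝ → ℝ} (hl : Differentiable ℝ l) {ψ : E → ℝ} {η : ℝ} {idx : ℕ → ι} {w : ℕ → E}
    (hupd : ∀ i : ℕ,
      gradient ψ (w (i + 1)) =
        gradient ψ (w i)
          - η • gradient (fun u => l (y (idx (i + 1)) - ⟪x (idx (i + 1)), u⟫)) (w i))
    (k : ℕ) : gradient ψ (w k) - gradient ψ (w 0) ∈ Submodule.span ℝ (Set.range x) := by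
  induction k with
  | zero => simp
  | succ i ih =>
    have hstep : gradient ψ (w (i + 1)) - gradient ψ (w i) ∈ Submodule.span ℝ (Set.range x) := by
      rw [hupd i, (hasGradientAt_comp_sub_inner (hl _)).gradient, sub_sub_cancel_left]
      exact neg_mem (Submodule.smul_mem _ _ (Submodule.smul_mem _ _
        (Submodule.subset_span ⟨idx (i + 1), rfl⟩)))
    simpa using add_mem hstep ih

theorem gradient_sub_mem_of_tendsto [FiniteDimensional ℝ E] {S : Submodule ℝ E} {ψ : E → ℝ}
    (hψ : ContDiff ℝ 1 ψ) {w : ℕ → E} {v u : E}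
    (hS : ∀ k, gradient ψ (w k) - gradient ψ v ∈ S)
    (hconv : Filter.Tendsto w Filter.atTop (nhds u)) :
    gradient ψ u - gradient ψ v ∈ S :=
  S.closed_of_finiteDimensional.mem_of_tendsto
    (((hψ.continuous_gradient.tendsto u).comp hconv).sub_const _) (.of_forall hS)

theorem IsLocalMin.gradient_eq_zero {f : E → ℝ} {a : E} (h : IsLocalMin f a) :
    gradient f a = 0 := by
  simp [gradient, h.fderiv_eq_zero]

end InnerProductSpace

section Bregman

variable {m : ℕ} {ψ : EuclideanSpace ℝ (Fin m) → ℝ}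

theorem Dbreg_nonneg (hψ : ConvexOn ℝ Set.univ ψ) {u v : EuclideanSpace ℝ (Fin m)}
    (hv : DifferentiableAt ℝ ψ v) : 0 ≤ Dbreg ψ u v :=
  sub_nonneg.2 (hψ.inner_gradient_le_sub hv)

theorem Dbreg_eq_add_add_inner (ψ : EuclideanSpace ℝ (Fin m) → ℝ) (u v w : EuclideanSpace ℝ (Fin m)) :
    Dbreg ψ u w = Dbreg ψ u v + Dbreg ψ v w + ⟪gradient ψ v - gradient ψ w, u - v⟫ := by
  simp only [Dbreg, inner_sub_left, inner_sub_right]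
  ring

theorem Dbreg_of_gradient_eq_zero {u v : EuclideanSpace ℝ (Fin m)} (hv : gradient ψ v = 0) :
    Dbreg ψ u v = ψ u - ψ v := by
  simp [Dbreg, hv]

end Bregman

theorem stmt_15_general {m n : ℕ}
    (x : Fin n → EuclideanSpace ℝ (Fin m)) (y : Fin n → ℝ)
    (l : ℝ → ℝ) (hl : Differentiable ℝ l)
    (ψ : EuclideanSpace ℝ (Fin m) → ℝ) (hψ : ContDiff ℝ 1 ψ)
    (hψconv : StrictConvexOn ℝ Set.univ ψ)
    (W : Set (EuclideanSpace ℝ (Fin m)))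
    (hWdef : W = {u : EuclideanSpace ℝ (Fin m) | ∀ j : Fin n, y j = ⟪x j, u⟫})
    (η : ℝ)
    (idx : ℕ → Fin n)
    (w₀ : EuclideanSpace ℝ (Fin m))
    (w : ℕ → EuclideanSpace ℝ (Fin m)) (hw0 : w 0 = w₀)
    (hupd : ∀ i : ℕ,
      gradient ψ (w (i + 1)) =
        gradient ψ (w i)
          - η • gradient (fun u => l (y (idx (i + 1)) - ⟪x (idx (i + 1)), u⟫)) (w i))
    (winf : EuclideanSpace ℝ (Fin m))
    (hconv : Filter.Tendsto w Filter.atTop (nhds winf))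
    (hmem : winf ∈ W) :
    (∀ w' ∈ W, Dbreg ψ winf w₀ ≤ Dbreg ψ w' w₀) ∧
    (∀ w' ∈ W, Dbreg ψ w' w₀ = Dbreg ψ w' winf + Dbreg ψ winf w₀) ∧
    ((∀ u, ψ w₀ ≤ ψ u) → ∀ w' ∈ W, ψ winf ≤ ψ w') := by
  have hW : ∀ w' ∈ W, ∀ j, ⟪x j, w'⟫ = ⟪x j, winf⟫ := by
    rw [hWdef] at hmem ⊢
    exact fun w' hw' j => (hw' j).symm.trans (hmem j)
  have hspan : gradient ψ winf - gradient ψ w₀ ∈ Submodule.span ℝ (Set.range x) :=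
    gradient_sub_mem_of_tendsto hψ (hw0 ▸ gradient_sub_mem_span_of_mirror_descent hl hupd) hconv
  have hpyth : ∀ w' ∈ W, Dbreg ψ w' w₀ = Dbreg ψ w' winf + Dbreg ψ winf w₀ := fun w' hw' => by
    rw [Dbreg_eq_add_add_inner ψ w' winf w₀, inner_sub_eq_zero_of_mem_span hspan (hW w' hw'),
      add_zero]
  have hmin : ∀ w' ∈ W, Dbreg ψ winf w₀ ≤ Dbreg ψ w' w₀ := fun w' hw' =>
    hpyth w' hw' ▸
      le_add_of_nonneg_left (Dbreg_nonneg hψconv.convexOn (hψ.differentiable one_ne_zero _))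
  refine ⟨hmin, hpyth, fun hψmin w' hw' => ?_⟩
  have hgrad : gradient ψ w₀ = 0 := IsLocalMin.gradient_eq_zero (.of_forall hψmin)
  simpa [Dbreg_of_gradient_eq_zero hgrad] using hmin w' hw'

/-- (Proposition 1, implicit regularization of SMD in the
over-parameterized linear case: if the SMD iterates converge to an interpolating solution
`w_∞ ∈ W`, then `w_∞ = argmin_{w ∈ W} D_ψ(w, w₀)`; indeed a Pythagorean identity holds,
and if `w₀` globally minimizes `ψ` then `w_∞` minimizes `ψ` over `W`).
The `n` data points are revisited so that each index appears infinitely often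
(`idx k` is the index used at step `k`). -/
theorem stmt_15 {m n : ℕ}
    (x : Fin n → EuclideanSpace ℝ (Fin m)) (y : Fin n → ℝ)
    (l : ℝ → ℝ) (hl : Differentiable ℝ l) (hl0 : l 0 = 0)
    (ψ : EuclideanSpace ℝ (Fin m) → ℝ) (hψ : ContDiff ℝ 1 ψ)
    (hψconv : StrictConvexOn ℝ Set.univ ψ)
    (W : Set (EuclideanSpace ℝ (Fin m)))
    (hWdef : W = {u : EuclideanSpace ℝ (Fin m) | ∀ j : Fin n, y j = ⟪x j, u⟫})
    (hWne : W.Nonempty)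
    (η : ℝ) (hη : 0 < η)
    (idx : ℕ → Fin n) (hidx : ∀ j : Fin n, ∀ N : ℕ, ∃ k : ℕ, N ≤ k ∧ idx k = j)
    (w₀ : EuclideanSpace ℝ (Fin m))
    (w : ℕ → EuclideanSpace ℝ (Fin m)) (hw0 : w 0 = w₀)
    (hupd : ∀ i : ℕ,
      gradient ψ (w (i + 1)) =
        gradient ψ (w i)
          - η • gradient (fun u => l (y (idx (i + 1)) - ⟪x (idx (i + 1)), u⟫)) (w i))
    (winf : EuclideanSpace ℝ (Fin m))
    (hconv : Filter.Tendsto w Filter.atTop (nhds winf))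
    (hmem : winf ∈ W) :
    (∀ w' ∈ W, Dbreg ψ winf w₀ ≤ Dbreg ψ w' w₀) ∧
    (∀ w' ∈ W, Dbreg ψ w' w₀ = Dbreg ψ w' winf + Dbreg ψ winf w₀) ∧
    ((∀ u, ψ w₀ ≤ ψ u) → ∀ w' ∈ W, ψ winf ≤ ψ w') :=
  stmt_15_general x y l hl ψ hψ hψconv W hWdef η idx w₀ w hw0 hupd winf hconv hmem
end

section
/- (SMD identity with time-varying step sizes.) For any differentiable models f_i : ℝ^m → ℝ, any differentiable loss l, any parameter w and noise values v_i with y_i = f_i(w) + v_i for i = 1, …, T, any initialization w_0, any positive step-size sequence {η_i}, and any T ≥ 1, the time-varying SMD iterates satisfy D_ψ(w, w_0) + Σ_{i=1}^T η_i l(v_i) = D_ψ(w, w_T) + Σ_{i=1}^T ( E_i(w_i, w_{i−1}) + η_i D_{L_i}(w, w_{i−1}) ), where E_i(w_i, w_{i−1}) := D_ψ(w_i, w_{i−1}) − η_i D_{L_i}(w_i, w_{i−1}) + η_i L_i(w_i). -/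
/-! Each SMD step is the three-point identity for the Bregman divergence of `ψ` at
`w⋆, wᵢ₊₁, wᵢ`, in which the mirror update turns the cross term
`⟪∇ψ(wᵢ₊₁) - ∇ψ(wᵢ), w⋆ - wᵢ₊₁⟫` into `-ηᵢ₊₁ ⟪∇Lᵢ₊₁(wᵢ), w⋆ - wᵢ₊₁⟫`; this is exactly the
difference of the two linearisations of `Lᵢ₊₁` at `wᵢ`. Since `Lᵢ₊₁(w⋆) = l(vᵢ₊₁)`, summing
the steps telescopes. -/

open scoped RealInnerProductSpace

open Finset

theorem add_sum_range_eq_of_step {M : Type*} [AddCommGroup M] {a b c : ℕ → M}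
    (h : ∀ i, a i + b i = a (i + 1) + c i) (T : ℕ) :
    a 0 + ∑ i ∈ range T, b i = a T + ∑ i ∈ range T, c i := by
  induction T with
  | zero => simp
  | succ n ih =>
    rw [sum_range_succ, sum_range_succ, ← add_assoc, ih, add_right_comm, h n]
    abel

section Bregman

variable {m : ℕ}

theorem Dbreg_three_point (g : EuclideanSpace ℝ (Fin m) → ℝ)
    (a b c : EuclideanSpace ℝ (Fin m)) :
    Dbreg g a c = Dbreg g a b + Dbreg g b c + ⟪gradient g b - gradient g c, a - b⟫ := by
  simp only [Dbreg, inner_sub_left, inner_sub_right]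
  ring

theorem Dbreg_sub_Dbreg_same_base (g : EuclideanSpace ℝ (Fin m) → ℝ)
    (a b c : EuclideanSpace ℝ (Fin m)) :
    Dbreg g a c - Dbreg g b c = g a - g b - ⟪gradient g c, a - b⟫ := by
  simp only [Dbreg, inner_sub_right]
  ring

theorem Dbreg_mirror_step (ψ L : EuclideanSpace ℝ (Fin m) → ℝ) (η : ℝ)
    {u u' : EuclideanSpace ℝ (Fin m)} (hupd : gradient ψ u' = gradient ψ u - η • gradient L u)
    (wstar : EuclideanSpace ℝ (Fin m)) :
    Dbreg ψ wstar u + η * L wstar =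
      Dbreg ψ wstar u' + ((Dbreg ψ u' u - η * Dbreg L u' u + η * L u') + η * Dbreg L wstar u) := by
  have hL := Dbreg_sub_Dbreg_same_base L wstar u' u
  rw [Dbreg_three_point ψ wstar u' u, hupd, sub_sub_cancel_left, inner_neg_left,
    real_inner_smul_left]
  linear_combination -η * hL

end Bregman

theorem stmt_18_general {m : ℕ} (T : ℕ) (y : ℕ → ℝ)
    (f : ℕ → EuclideanSpace ℝ (Fin m) → ℝ)
    (l : ℝ → ℝ)
    (ψ : EuclideanSpace ℝ (Fin m) → ℝ)
    (L : ℕ → EuclideanSpace ℝ (Fin m) → ℝ)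
    (hLdef : ∀ i u, L i u = l (y i - f i u))
    (η : ℕ → ℝ)
    (w₀ : EuclideanSpace ℝ (Fin m))
    (w : ℕ → EuclideanSpace ℝ (Fin m)) (hw0 : w 0 = w₀)
    (hupd : ∀ i : ℕ,
      gradient ψ (w (i + 1)) =
        gradient ψ (w i) - η (i + 1) • gradient (L (i + 1)) (w i))
    (wstar : EuclideanSpace ℝ (Fin m)) (v : ℕ → ℝ)
    (hdata : ∀ i : ℕ, y (i + 1) = f (i + 1) wstar + v (i + 1)) :
    Dbreg ψ wstar w₀ + ∑ i ∈ Finset.range T, η (i + 1) * l (v (i + 1)) =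
      Dbreg ψ wstar (w T)
        + ∑ i ∈ Finset.range T,
            ((Dbreg ψ (w (i + 1)) (w i)
                - η (i + 1) * Dbreg (L (i + 1)) (w (i + 1)) (w i)
                + η (i + 1) * L (i + 1) (w (i + 1)))
              + η (i + 1) * Dbreg (L (i + 1)) wstar (w i)) := by
  have hnoise : ∀ i, l (v (i + 1)) = L (i + 1) wstar := fun i => by
    rw [hLdef, hdata, add_sub_cancel_left]
  simp only [hnoise, ← hw0]
  exact add_sum_range_eq_of_step
    (fun i => Dbreg_mirror_step ψ (L (i + 1)) (η (i + 1)) (hupd i) wstar) T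

/-- fundamental telescoped identity for SMD with time-varying step
sizes `η_i > 0`: the iterates satisfy `∇ψ(w_i) = ∇ψ(w_{i-1}) - η_i ∇L_i(w_{i-1})`. -/
theorem stmt_18 {m : ℕ} (T : ℕ) (hT : 1 ≤ T) (y : ℕ → ℝ)
    (f : ℕ → EuclideanSpace ℝ (Fin m) → ℝ) (hf : ∀ i, Differentiable ℝ (f i))
    (l : ℝ → ℝ) (hl : Differentiable ℝ l)
    (ψ : EuclideanSpace ℝ (Fin m) → ℝ) (hψ : Differentiable ℝ ψ)
    (hψconv : StrictConvexOn ℝ Set.univ ψ)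
    (L : ℕ → EuclideanSpace ℝ (Fin m) → ℝ)
    (hLdef : ∀ i u, L i u = l (y i - f i u))
    (η : ℕ → ℝ) (hη : ∀ i, 0 < η i)
    (w₀ : EuclideanSpace ℝ (Fin m))
    (w : ℕ → EuclideanSpace ℝ (Fin m)) (hw0 : w 0 = w₀)
    (hupd : ∀ i : ℕ,
      gradient ψ (w (i + 1)) =
        gradient ψ (w i) - η (i + 1) • gradient (L (i + 1)) (w i))
    (wstar : EuclideanSpace ℝ (Fin m)) (v : ℕ → ℝ)
    (hdata : ∀ i : ℕ, y (i + 1) = f (i + 1) wstar + v (i + 1)) :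
    Dbreg ψ wstar w₀ + ∑ i ∈ Finset.range T, η (i + 1) * l (v (i + 1)) =
      Dbreg ψ wstar (w T)
        + ∑ i ∈ Finset.range T,
            ((Dbreg ψ (w (i + 1)) (w i)
                - η (i + 1) * Dbreg (L (i + 1)) (w (i + 1)) (w i)
                + η (i + 1) * L (i + 1) (w (i + 1)))
              + η (i + 1) * Dbreg (L (i + 1)) wstar (w i)) :=
  stmt_18_general T y f l ψ L hLdef η w₀ w hw0 hupd wstar v hdata
end
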